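/- arXiv:2006.14968 — 8 statements merged into one kernel-verified Lean document; each statement's English description precedes it below -/
import Mathlib

section
/- Let A be a finite alphabet with |A| ≥ 2 and n ≥ 1. A product code X_{i=1}^n P_i in nA^* (where each P_i ⊆ A^* is a prefix code) is a maximal joinless code if and only if every P_i is a maximal prefix code in A^*. -/
/-- A prefix code: no element is a strict prefix of another. -/
def PrefixCode {A : Type*} (P : Set (List A)) : Prop :=
  ∀ p ∈ P, ∀ q ∈ P, p <+: q → p = q

/-- A maximal prefix code of `A^*`. -/
def MaxPrefixCode {A : Type*} (P : Set (List A)) : Prop :=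
  PrefixCode P ∧ ∀ Q : Set (List A), PrefixCode Q → P ⊆ Q → P = Q

/-- Two `n`-tuples of strings have a join iff they are coordinatewise prefix-comparable. -/
def HasJoin {A : Type*} {n : ℕ} (u v : Fin n → List A) : Prop :=
  ∀ i, u i <+: v i ∨ v i <+: u i

/-- A joinless code in `nA^*`. -/
def JoinlessCode {A : Type*} {n : ℕ} (S : Set (Fin n → List A)) : Prop :=
  ∀ u ∈ S, ∀ v ∈ S, u ≠ v → ¬ HasJoin u v

/-- A maximal joinless code in `nA^*`. -/
def MaxJoinlessCode {A : Type*} {n : ℕ} (S : Set (Fin n → List A)) : Prop :=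
  JoinlessCode S ∧ ∀ T : Set (Fin n → List A), JoinlessCode T → S ⊆ T → S = T

lemma maxPrefixCode_iff_complete {A : Type*} {P : Set (List A)} (hP : PrefixCode P) :
    MaxPrefixCode P ↔ ∀ w : List A, ∃ p ∈ P, p <+: w ∨ w <+: p := by
  constructor
  · rintro ⟨-, hmax⟩ w
    by_contra hcon
    push_neg at hcon
    have hQ : PrefixCode (insert w P) := by
      rintro p (rfl | hp) q (rfl | hq) hpq
      · rfl
      · exact absurd hpq (hcon q hq).2
      · exact absurd hpq (hcon p hp).1
      · exact hP p hp q hq hpq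
    have h := hmax _ hQ (Set.subset_insert w P)
    have hw : w ∈ P := h ▸ Set.mem_insert w P
    exact (hcon w hw).1 List.prefix_rfl
  · intro h
    refine ⟨hP, fun Q hQ hPQ => Set.Subset.antisymm hPQ fun q hq => ?_⟩
    obtain ⟨p, hp, hc⟩ := h q
    rcases hc with hc | hc
    · exact hQ p (hPQ hp) q hq hc ▸ hp
    · exact (hQ q hq p (hPQ hp) hc).symm ▸ hp

/-- A product code `X_{i=1}^n P_i` of prefix codes is a maximal joinless code iff
every `P_i` is a maximal prefix code. -/
theorem stmt_1 {A : Type*} [Fintype A] (hA : 2 ≤ Fintype.card A)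
    {n : ℕ} (hn : 1 ≤ n) (P : Fin n → Set (List A))
    (hP : ∀ i, PrefixCode (P i)) :
    MaxJoinlessCode {u : Fin n → List A | ∀ i, u i ∈ P i} ↔
      ∀ i, MaxPrefixCode (P i) := by
  set S := {u : Fin n → List A | ∀ i, u i ∈ P i} with hSdef
  constructor
  · rintro ⟨hjl, hmax⟩ i
    have hSne : S.Nonempty := by
      by_contra hne
      rw [Set.not_nonempty_iff_eq_empty] at hne
      have hT : JoinlessCode ({fun _ => []} : Set (Fin n → List A)) := by
        intro u hu v hv huv _
        simp only [Set.mem_singleton_iff] at hu hv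
        exact huv (hu.trans hv.symm)
      have h := hmax _ hT (by simp [hne])
      rw [hne] at h
      exact absurd h.symm (by simp)
    obtain ⟨u0, hu0⟩ := hSne
    rw [maxPrefixCode_iff_complete (hP i)]
    intro w
    by_contra hcon
    push_neg at hcon
    set v : Fin n → List A := Function.update u0 i w with hv
    have hvi : v i = w := Function.update_self i w u0
    have hvS : v ∉ S := fun h => (hcon w (hvi ▸ h i)).1 List.prefix_rfl
    have hT : JoinlessCode (insert v S) := by
      rintro a (rfl | ha) b (rfl | hb) hab hjoin
      · exact hab rfl
      · have hj := hjoin i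
        rw [hvi] at hj
        rcases hj with h | h
        · exact (hcon _ (hb i)).2 h
        · exact (hcon _ (hb i)).1 h
      · have hj := hjoin i
        rw [hvi] at hj
        rcases hj with h | h
        · exact (hcon _ (ha i)).1 h
        · exact (hcon _ (ha i)).2 h
      · exact hjl a ha b hb hab hjoin
    have h := hmax _ hT (Set.subset_insert _ _)
    exact hvS (h ▸ Set.mem_insert _ _)
  · intro hmaxP
    constructor
    · intro u hu v hv huv hjoin
      apply huv
      funext i
      rcases hjoin i with h | h
      · exact hP i _ (hu i) _ (hv i) h
      · exact (hP i _ (hv i) _ (hu i) h).symm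
    · intro T hT hST
      refine Set.Subset.antisymm hST fun v hv => ?_
      have h := fun i => ((maxPrefixCode_iff_complete (hP i)).mp (hmaxP i)) (v i)
      choose p hp hcomp using h
      have hpS : p ∈ S := hp
      have hpv : p = v := by
        by_contra hne
        exact hT p (hST hpS) v hv hne hcomp
      exact hpv ▸ hpS
end

section
/- For every n ≥ 1 and k ≥ 2, every finite maximal joinless code in nA_k^* has cardinality 1 + (k−1)·N for some natural number N ≥ 0 (equivalently, its cardinality is congruent to 1 modulo k−1). -/
lemma prefix_ofFn_iff {α : Type*} {m : ℕ} (l : List α) (g : Fin m → α) (hL : l.length ≤ m) :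
    l <+: List.ofFn g ↔ ∀ j : ℕ, ∀ hj : j < l.length, l[j] = g ⟨j, lt_of_lt_of_le hj hL⟩ := by
  constructor
  · intro h j hj
    have h2 := h.getElem hj
    rw [List.getElem_ofFn] at h2
    exact h2
  · intro h
    have hl : l = (List.ofFn g).take l.length := by
      apply List.ext_getElem
      · simp [hL]
      · intro i h1 h2
        rw [List.getElem_take, List.getElem_ofFn]
        exact h i h1
    rw [hl]
    exact List.take_prefix _ _

lemma card_prefix_ext {k m : ℕ} (l : List (Fin k)) (hL : l.length ≤ m) :
    Fintype.card {g : Fin m → Fin k // l <+: List.ofFn g} = k ^ (m - l.length) := by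
  have e : {g : Fin m → Fin k // l <+: List.ofFn g} ≃ (Fin (m - l.length) → Fin k) :=
    { toFun := fun g t => g.1 ⟨l.length + t, by omega⟩
      invFun := fun t =>
        ⟨fun j => if hj : (j : ℕ) < l.length then l[(j : ℕ)]
          else t ⟨(j : ℕ) - l.length, by omega⟩, by
          rw [prefix_ofFn_iff _ _ hL]
          intro j hj
          simp [hj]⟩
      left_inv := by
        rintro ⟨g, hg⟩
        apply Subtype.ext
        funext j
        by_cases hj : (j : ℕ) < l.length
        · simp only [dif_pos hj]
          exact (prefix_ofFn_iff l g hL).mp hg j hj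
        · simp only [dif_neg hj]
          congr 1
          exact Fin.ext (by simp; omega)
      right_inv := by
        intro t
        funext t'
        simp only [dif_neg (show ¬ (l.length + (t' : ℕ) < l.length) by omega)]
        congr 1
        exact Fin.ext (by simp) }
  rw [Fintype.card_congr e]
  simp

lemma hasJoin_symm {A : Type*} {n : ℕ} {u v : Fin n → List A} (h : HasJoin u v) :
    HasJoin v u := fun i => (h i).symm

lemma cover_exists {n k : ℕ} (C : Finset (Fin n → List (Fin k)))
    (hC : MaxJoinlessCode (C : Set (Fin n → List (Fin k))))
    {m : ℕ} (hm : ∀ u ∈ C, ∀ i, (u i).length ≤ m)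
    (w : Fin n → Fin m → Fin k) :
    ∃! u, u ∈ C ∧ ∀ i, u i <+: List.ofFn (w i) := by
  set W : Fin n → List (Fin k) := fun i => List.ofFn (w i) with hWdef
  have key : ∃ u ∈ C, HasJoin u W := by
    by_cases hWC : W ∈ C
    · exact ⟨W, hWC, fun i => Or.inl (List.prefix_refl _)⟩
    · have hne : ¬ JoinlessCode (insert W (C : Set (Fin n → List (Fin k)))) := by
        intro hJ
        have heq := hC.2 _ hJ (Set.subset_insert _ _)
        have : W ∈ (C : Set (Fin n → List (Fin k))) := heq ▸ Set.mem_insert _ _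
        exact hWC this
      unfold JoinlessCode at hne
      push_neg at hne
      obtain ⟨u, hu, v, hv, huv, hJ⟩ := hne
      rcases Set.mem_insert_iff.mp hu with rfl | hu
      · rcases Set.mem_insert_iff.mp hv with rfl | hv
        · exact absurd rfl huv
        · exact ⟨v, hv, hasJoin_symm hJ⟩
      · rcases Set.mem_insert_iff.mp hv with rfl | hv
        · exact ⟨u, hu, hJ⟩
        · exact absurd hJ (hC.1 u hu v hv huv)
  obtain ⟨u, hu, hJ⟩ := key
  have hpre : ∀ i, u i <+: W i := by
    intro i
    rcases hJ i with h | h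
    · exact h
    · have hlen : (u i).length ≤ (W i).length := by
        have h4 := hm u hu i
        simp only [hWdef, List.length_ofFn]
        exact h4
      rw [h.eq_of_length_le hlen]
  refine ⟨u, ⟨hu, hpre⟩, ?_⟩
  rintro v ⟨hv, hvpre⟩
  by_contra hne
  apply hC.1 v hv u hu hne
  intro i
  exact List.prefix_or_prefix_of_prefix (hvpre i) (hpre i)

/-- Every finite maximal joinless code in `n(A_k)^*` has cardinality `1 + (k-1)·N`
for some natural number `N`. -/
theorem stmt_2 {n k : ℕ} (hn : 1 ≤ n) (hk : 2 ≤ k)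
    (C : Finset (Fin n → List (Fin k)))
    (hC : MaxJoinlessCode (C : Set (Fin n → List (Fin k)))) :
    ∃ N : ℕ, C.card = 1 + (k - 1) * N := by
  classical
  set m := C.sup (fun u => Finset.univ.sup fun i => (u i).length) with hmdef
  have hmb : ∀ u ∈ C, ∀ i, (u i).length ≤ m := fun u hu i =>
    le_trans (Finset.le_sup (f := fun i => (u i).length) (Finset.mem_univ i))
      (Finset.le_sup (f := fun u => Finset.univ.sup fun i => (u i).length) hu)
  have hex := cover_exists C hC hmb
  set f : (Fin n → Fin m → Fin k) → (Fin n → List (Fin k)) :=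
    fun w => C.choose (fun u => ∀ i, u i <+: List.ofFn (w i)) (hex w) with hfdef
  have hfmem : ∀ w, f w ∈ C := fun w => Finset.choose_mem _ _ _
  have hfprop : ∀ w, ∀ i, (f w) i <+: List.ofFn (w i) := by
    intro w
    exact Finset.choose_property (fun u => ∀ i, u i <+: List.ofFn (w i)) C (hex w)
  clear_value f m
  clear hfdef hmdef
  have hcard : (Finset.univ : Finset (Fin n → Fin m → Fin k)).card
      = ∑ u ∈ C, ((Finset.univ : Finset (Fin n → Fin m → Fin k)).filter
          fun w => f w = u).card :=
    Finset.card_eq_sum_card_fiberwise (fun w _ => hfmem w)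
  have hfib : ∀ u ∈ C, ((Finset.univ : Finset (Fin n → Fin m → Fin k)).filter
      fun w => f w = u).card = ∏ i, k ^ (m - (u i).length) := by
    intro u hu
    have hiff : ∀ w : Fin n → Fin m → Fin k, f w = u ↔ ∀ i, u i <+: List.ofFn (w i) := by
      intro w
      constructor
      · rintro rfl; exact hfprop w
      · intro h
        exact (hex w).unique ⟨hfmem w, hfprop w⟩ ⟨hu, h⟩
    have h1 : ((Finset.univ : Finset (Fin n → Fin m → Fin k)).filter fun w => f w = u).card
        = Fintype.card {w : Fin n → Fin m → Fin k // ∀ i, u i <+: List.ofFn (w i)} := by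
      rw [Fintype.card_subtype]
      congr 1
      ext w
      simp [hiff]
    rw [h1, Fintype.card_congr (Equiv.subtypePiEquivPi
      (p := fun i (g : Fin m → Fin k) => u i <+: List.ofFn g)), Fintype.card_pi]
    exact Finset.prod_congr rfl fun i _ => card_prefix_ext (u i) (hmb u hu i)
  -- nonemptiness of C
  have hCne : 1 ≤ C.card := by
    obtain ⟨u, ⟨hu, _⟩, _⟩ := hex (fun _ _ => ⟨0, by omega⟩)
    exact Finset.card_pos.mpr ⟨u, hu⟩
  -- pass to ZMod (k-1)
  have hk1 : ((k : ZMod (k - 1))) = 1 := by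
    have h2 : (k : ℕ) = (k - 1) + 1 := by omega
    rw [h2]
    push_cast
    simp
  have hz : ((C.card : ZMod (k - 1))) = 1 := by
    have h3 := congrArg (fun x : ℕ => (x : ZMod (k - 1))) hcard
    simp only [Finset.card_univ, Fintype.card_fun, Fintype.card_fin] at h3
    rw [Finset.sum_congr rfl hfib] at h3
    push_cast at h3
    rw [hk1] at h3
    simpa using h3.symm
  have hmod : C.card ≡ 1 [MOD k - 1] := by
    have := (ZMod.natCast_eq_natCast_iff C.card 1 (k - 1)).mp (by simpa using hz)
    exact this
  obtain ⟨N, hN⟩ := (Nat.modEq_iff_dvd' hCne).mp hmod.symm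
  exact ⟨N, by omega⟩
end

section
/- Let n ≥ 1, k ≥ 2, let C ⊆ nA_k^* be a finite joinless code, and let ℓ ≥ maxlen(C), where maxlen(C) is the maximum of the lengths of the coordinates of the elements of C. Then C is a maximal joinless code if and only if for every n-tuple u ∈ nA_k^* all of whose coordinates have length exactly ℓ, there exists z ∈ C with z ≤_init u. -/
lemma prefOrPref {α : Type*} {l₁ l₂ l₃ : List α} (h1 : l₁ <+: l₃) (h2 : l₂ <+: l₃) :
    l₁ <+: l₂ ∨ l₂ <+: l₁ := by
  rw [List.prefix_iff_eq_take.mp h1, List.prefix_iff_eq_take.mp h2,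
    List.take_isPrefix_take, List.take_isPrefix_take]
  omega

/-- A finite joinless code `C` with all coordinate lengths `≤ ℓ` is maximal iff every
`n`-tuple of strings of length exactly `ℓ` has an element of `C` as an initial factor. -/
theorem stmt_5 {n k : ℕ} (hn : 1 ≤ n) (hk : 2 ≤ k)
    (C : Set (Fin n → List (Fin k))) (hfin : C.Finite)
    (hC : JoinlessCode C) (ℓ : ℕ)
    (hℓ : ∀ z ∈ C, ∀ i, (z i).length ≤ ℓ) :
    MaxJoinlessCode C ↔
      ∀ u : Fin n → List (Fin k), (∀ i, (u i).length = ℓ) →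
        ∃ z ∈ C, ∀ i, z i <+: u i := by
  constructor
  · rintro ⟨hjl, hmax⟩ u hu
    by_contra h
    push_neg at h
    have huC : u ∉ C := by
      intro huC
      obtain ⟨i, hi⟩ := h u huC
      exact hi (List.prefix_refl _)
    have key : ∀ b ∈ C, ¬ HasJoin u b := by
      intro b hb hj
      obtain ⟨i, hi⟩ := h b hb
      apply hi
      rcases hj i with h1 | h1
      · have hlen : (b i).length ≤ (u i).length := (hu i) ▸ hℓ b hb i
        have : u i = b i := h1.eq_of_length (le_antisymm h1.length_le hlen)
        exact this ▸ List.prefix_refl _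
      · exact h1
    have hjl' : JoinlessCode (insert u C) := by
      intro a ha b hb hab hj
      rcases Set.mem_insert_iff.1 ha with hau | ha
      · rcases Set.mem_insert_iff.1 hb with hbu | hb
        · exact hab (hau.trans hbu.symm)
        · exact key b hb (hau ▸ hj)
      · rcases Set.mem_insert_iff.1 hb with hbu | hb
        · exact key a ha (fun i => (hbu ▸ hj i).symm)
        · exact hC a ha b hb hab hj
    have := hmax (insert u C) hjl' (Set.subset_insert _ _)
    exact huC (this ▸ Set.mem_insert u C)
  · intro hcov
    refine ⟨hC, fun T hT hsub => Set.Subset.antisymm hsub (fun t ht => ?_)⟩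
    have hk0 : 0 < k := by omega
    set pad : Fin k := ⟨0, hk0⟩ with hpad
    set u : Fin n → List (Fin k) := fun i => (t i ++ List.replicate ℓ pad).take ℓ with hudef
    have hulen : ∀ i, (u i).length = ℓ := by
      intro i
      simp [hudef, List.length_take]
    obtain ⟨z, hz, hzu⟩ := hcov u hulen
    have hjoin : HasJoin z t := by
      intro i
      have h1 : z i <+: (t i ++ List.replicate ℓ pad) :=
        (hzu i).trans (List.take_prefix _ _)
      have h2 : t i <+: (t i ++ List.replicate ℓ pad) := List.prefix_append _ _
      exact prefOrPref h1 h2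
    by_cases hzt : z = t
    · exact hzt ▸ hz
    · exact absurd hjoin (hT z (hsub hz) t ht hzt)
end

section
/- Let n ≥ 1, k ≥ 2, K ≥ 2, let P ⊆ A_k^* be a finite maximal prefix code, and let c : A_K → P be a bijection; extend c to a monoid homomorphism c : A_K^* → A_k^* (mapping a string v_1...v_m to the concatenation c(v_1)...c(v_m)) and apply it coordinatewise to n-tuples: c(q) = (c(q_1),...,c(q_n)). If Q ⊆ nA_K^* is a finite maximal joinless code, then c(Q) = {c(q) : q ∈ Q} is a finite maximal joinless code in nA_k^*. -/
/-- The extension of a letter-coding `c : A_K → A_k^*` to a monoid homomorphism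
`A_K^* → A_k^*`, applied coordinatewise to `n`-tuples. -/
def codeMap {K k n : ℕ} (c : Fin K → List (Fin k)) (q : Fin n → List (Fin K)) :
    Fin n → List (Fin k) :=
  fun i => ((q i).map c).flatten

/-- Every string is prefix-comparable with some element of a maximal prefix code. -/
lemma max_prefix_comp {A : Type*} {P : Set (List A)} (hP : MaxPrefixCode P)
    (w : List A) : ∃ p ∈ P, p <+: w ∨ w <+: p := by
  by_contra h
  push_neg at h
  have hpc : PrefixCode (insert w P) := by
    intro p hp q hq hpq
    rcases hp with rfl | hp <;> rcases hq with rfl | hq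
    · rfl
    · exact absurd hpq (h q hq).2
    · exact absurd hpq (h p hp).1
    · exact hP.1 p hp q hq hpq
  have heq := hP.2 (insert w P) hpc (Set.subset_insert w P)
  have hwP : w ∈ P := heq ▸ Set.mem_insert w P
  exact (h w hwP).1 (List.prefix_refl w)

/-- Every tuple has a join with some element of a maximal joinless code. -/
lemma max_joinless_join {A : Type*} {n : ℕ} {Q : Set (Fin n → List A)}
    (hQ : MaxJoinlessCode Q) (u : Fin n → List A) : ∃ q ∈ Q, HasJoin u q := by
  by_contra h
  push_neg at h
  have hjc : JoinlessCode (insert u Q) := by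
    intro a ha b hb hne hj
    rcases ha with rfl | ha <;> rcases hb with rfl | hb
    · exact hne rfl
    · exact h b hb hj
    · exact h a ha (fun i => (hj i).symm)
    · exact hQ.1 a ha b hb hne hj
  have heq := hQ.2 (insert u Q) hjc (Set.subset_insert u Q)
  have huQ : u ∈ Q := heq ▸ Set.mem_insert u Q
  exact h u huQ (fun i => Or.inl (List.prefix_refl _))

/-- If `c : A_K → P` is a bijection onto a finite maximal prefix code `P ⊆ A_k^*`, and
`Q ⊆ n(A_K)^*` is a finite maximal joinless code, then `c(Q)` is a finite maximal
joinless code in `n(A_k)^*`. -/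
theorem stmt_6 {n k K : ℕ} (hn : 1 ≤ n) (hk : 2 ≤ k) (hK : 2 ≤ K)
    (P : Set (List (Fin k))) (hPfin : P.Finite) (hP : MaxPrefixCode P)
    (c : Fin K → List (Fin k)) (hinj : Function.Injective c)
    (hrange : Set.range c = P)
    (Q : Set (Fin n → List (Fin K))) (hQfin : Q.Finite)
    (hQ : MaxJoinlessCode Q) :
    (codeMap c '' Q).Finite ∧ MaxJoinlessCode (codeMap c '' Q) := by
  have hmem : ∀ a, c a ∈ P := fun a => hrange ▸ Set.mem_range_self a
  -- no code word is empty
  have hne : ∀ a, c a ≠ [] := by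
    intro a ha
    have hall : ∀ b, a = b := by
      intro b
      exact hinj (hP.1 (c a) (hmem a) (c b) (hmem b) (ha ▸ (c b).nil_prefix))
    have h0 : (⟨0, by omega⟩ : Fin K) = ⟨1, by omega⟩ :=
      (hall ⟨0, by omega⟩).symm.trans (hall ⟨1, by omega⟩)
    simp at h0
  -- monotonicity of the extension
  have mono : ∀ u v : List (Fin K), u <+: v →
      (u.map c).flatten <+: (v.map c).flatten := by
    rintro u v ⟨t, rfl⟩
    exact ⟨(t.map c).flatten, by simp⟩
  -- prefix reflection
  have reflect : ∀ u v : List (Fin K),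
      (u.map c).flatten <+: (v.map c).flatten → u <+: v := by
    intro u
    induction u with
    | nil => intro v _; exact v.nil_prefix
    | cons a u' ih =>
      intro v h
      cases v with
      | nil =>
        simp only [List.map_nil, List.flatten_nil, List.prefix_nil, List.map_cons,
          List.flatten_cons, List.append_eq_nil_iff] at h
        exact absurd h.1 (hne a)
      | cons b v' =>
        simp only [List.map_cons, List.flatten_cons] at h
        have hca : c a <+: c b ++ (v'.map c).flatten :=
          (List.prefix_append (c a) ((u'.map c).flatten)).trans h
        have hcb : c b <+: c b ++ (v'.map c).flatten := List.prefix_append _ _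
        have hab : a = b := by
          rcases List.prefix_or_prefix_of_prefix hca hcb with h1 | h1
          · exact hinj (hP.1 _ (hmem a) _ (hmem b) h1)
          · exact hinj (hP.1 _ (hmem b) _ (hmem a) h1).symm
        subst hab
        have hcancel : (u'.map c).flatten <+: (v'.map c).flatten := by
          obtain ⟨t, ht⟩ := h
          exact ⟨t, List.append_cancel_left (by rw [← List.append_assoc]; exact ht)⟩
        exact List.cons_prefix_cons.mpr ⟨rfl, ih v' hcancel⟩
  -- every string is a prefix of some code image
  have decode : ∀ N (w : List (Fin k)), w.length ≤ N →
      ∃ u : List (Fin K), w <+: (u.map c).flatten := by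
    intro N
    induction N with
    | zero =>
      intro w hw
      have : w = [] := List.eq_nil_of_length_eq_zero (Nat.le_zero.mp hw)
      exact ⟨[], by simp [this]⟩
    | succ N ih =>
      intro w hw
      obtain ⟨p, hpP, hcomp⟩ := max_prefix_comp hP w
      have hpr : p ∈ Set.range c := hrange.symm ▸ hpP
      obtain ⟨a, rfl⟩ := hpr
      rcases hcomp with h1 | h2
      · obtain ⟨w', rfl⟩ := h1
        have hlen : w'.length ≤ N := by
          have hpos : 0 < (c a).length := List.length_pos_iff.mpr (hne a)
          simp only [List.length_append] at hw
          omega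
        obtain ⟨u, t, ht⟩ := ih w' hlen
        exact ⟨a :: u, t, by simp [← ht]⟩
      · exact ⟨[a], by simpa using h2⟩
  refine ⟨hQfin.image _, ?_, ?_⟩
  · -- joinlessness of the image
    rintro w ⟨q, hq, rfl⟩ w' ⟨q', hq', rfl⟩ hne' hjoin
    have hqq' : q ≠ q' := fun h => hne' (congrArg (codeMap c) h)
    apply hQ.1 q hq q' hq' hqq'
    intro i
    rcases hjoin i with h | h
    · exact Or.inl (reflect _ _ h)
    · exact Or.inr (reflect _ _ h)
  · -- maximality
    intro T hT hsub
    refine Set.Subset.antisymm hsub ?_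
    intro t ht
    have hu : ∃ u : Fin n → List (Fin K), ∀ i, t i <+: ((u i).map c).flatten := by
      choose u hu using fun i => decode (t i).length (t i) le_rfl
      exact ⟨u, hu⟩
    obtain ⟨u, hu⟩ := hu
    obtain ⟨q, hqQ, hjoin⟩ := max_joinless_join hQ u
    have hkey : HasJoin t (codeMap c q) := by
      intro i
      rcases hjoin i with h | h
      · exact Or.inl ((hu i).trans (mono _ _ h))
      · exact List.prefix_or_prefix_of_prefix (hu i) (mono _ _ h)
    by_cases heq : t = codeMap c q
    · exact heq ▸ Set.mem_image_of_mem _ hqQ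
    · exact absurd hkey (hT t ht (codeMap c q) (hsub (Set.mem_image_of_mem _ hqQ)) heq)
end

section
/- Let A be a finite alphabet with |A| ≥ 2 and let m, n ≥ 1. If P ⊆ mA^* and Q ⊆ nA^* are finite maximal joinless codes that can be reached from the singleton {(ε,...,ε)} (of m, respectively n, empty strings) by finite sequences of one-step restrictions, then the cartesian product P × Q ⊆ (m+n)A^* is a finite maximal joinless code that can be reached from the (m+n)-tuple of empty strings by a finite sequence of one-step restrictions. -/
/-- One-step restriction: `Q` is obtained from `P` by replacing some `p ∈ P` by the
set of all `(p_1,...,p_{i-1}, p_i a, p_{i+1},...,p_n)` for `a ∈ A`. -/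
def RestrStep {A : Type*} {n : ℕ} (P Q : Set (Fin n → List A)) : Prop :=
  ∃ p ∈ P, ∃ i : Fin n,
    Q = (P \ {p}) ∪ {q | ∃ a : A, q = Function.update p i (p i ++ [a])}

/-- Reachability by a finite sequence of one-step restrictions. -/
def Reachable {A : Type*} {n : ℕ} (X Y : Set (Fin n → List A)) : Prop :=
  Relation.ReflTransGen RestrStep X Y

/-! Joins in `(m+n)A^*` are computed coordinatewise, so `p ++ q` and `p' ++ q'` have a join iff
`p, p'` and `q, q'` do. A joinless code is maximal iff every tuple has a join with one of its
words, and this property also splits over the two halves.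

For reachability, run the restrictions leading to `P` on the first `m` coordinates, reaching
`P × {ε}`; then, for each of the finitely many `p ∈ P` in turn, run the restrictions leading to
`Q` on the last `n` coordinates of `p ++ ε`. A restriction only touches words with the same first
half, so these runs do not interfere. -/

section
variable {A : Type*} {k l m n : ℕ}

theorem hasJoin_refl (u : Fin n → List A) : HasJoin u u :=
  fun _ => Or.inl (List.prefix_refl _)

theorem HasJoin.symm {u v : Fin n → List A} (h : HasJoin u v) : HasJoin v u :=
  fun i => (h i).symm

theorem maxJoinlessCode_iff {S : Set (Fin n → List A)} :
    MaxJoinlessCode S ↔ JoinlessCode S ∧ ∀ w, ∃ s ∈ S, HasJoin s w := by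
  refine ⟨fun hS => ⟨hS.1, fun w => ?_⟩, fun ⟨hS, hcomplete⟩ => ⟨hS, fun T hT hST => ?_⟩⟩
  · by_contra! hw
    have hSw : JoinlessCode (insert w S) := by
      rintro u (rfl | hu) v (rfl | hv) huv
      · exact absurd rfl huv
      · exact fun h => hw v hv h.symm
      · exact hw u hu
      · exact hS.1 u hu v hv huv
    have hwS : w ∈ S := (hS.2 _ hSw (Set.subset_insert w S)).symm ▸ Set.mem_insert w S
    exact hw w hwS (hasJoin_refl w)
  · refine hST.antisymm fun t ht => ?_
    obtain ⟨s, hs, hst⟩ := hcomplete t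
    obtain rfl | hne := eq_or_ne s t
    · exact hs
    · exact absurd hst (hT s (hST hs) t ht hne)

theorem Fin.append_eq_append_iff {α : Type*} {p p' : Fin m → α} {q q' : Fin n → α} :
    Fin.append p q = Fin.append p' q' ↔ p = p' ∧ q = q' := by
  rw [← Prod.mk.injEq, ← (Fin.appendEquiv m n).injective.eq_iff]; rfl

theorem hasJoin_append_iff {p p' : Fin m → List A} {q q' : Fin n → List A} :
    HasJoin (Fin.append p q) (Fin.append p' q') ↔ HasJoin p p' ∧ HasJoin q q' := by
  refine ⟨fun h => ⟨fun i => ?_, fun i => ?_⟩, fun ⟨hp, hq⟩ i => ?_⟩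
  · simpa using h (Fin.castAdd n i)
  · simpa using h (Fin.natAdd m i)
  · cases i using Fin.addCases <;> simp [hp _, hq _]

theorem maxJoinlessCode_image2_append {P : Set (Fin m → List A)} {Q : Set (Fin n → List A)}
    (hP : MaxJoinlessCode P) (hQ : MaxJoinlessCode Q) :
    MaxJoinlessCode (Set.image2 Fin.append P Q) := by
  rw [maxJoinlessCode_iff] at hP hQ ⊢
  refine ⟨?_, fun w => ?_⟩
  · rintro _ ⟨p, hp, q, hq, rfl⟩ _ ⟨p', hp', q', hq', rfl⟩ hne hj
    rw [hasJoin_append_iff] at hj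
    obtain rfl | hpp := eq_or_ne p p'
    · exact hQ.1 q hq q' hq' (fun hqq => hne (hqq ▸ rfl)) hj.2
    · exact hP.1 p hp p' hp' hpp hj.1
  · obtain ⟨p, hp, hjp⟩ := hP.2 fun i => w (Fin.castAdd n i)
    obtain ⟨q, hq, hjq⟩ := hQ.2 fun i => w (Fin.natAdd m i)
    refine ⟨Fin.append p q, Set.mem_image2_of_mem hp hq, ?_⟩
    simpa [Fin.append_castAdd_natAdd] using hasJoin_append_iff.2 ⟨hjp, hjq⟩

theorem Fin.append_update_left {α : Type*} (p : Fin m → α) (q : Fin n → α) (i : Fin m)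
    (x : α) :
    Fin.append (Function.update p i x) q
      = Function.update (Fin.append p q) (Fin.castAdd n i) x := by
  funext j
  cases j using Fin.addCases with
  | left j => by_cases hji : j = i <;> simp [hji]
  | right j =>
    rw [Function.update_of_ne (by simp [Fin.ext_iff]; omega), Fin.append_right, Fin.append_right]

theorem Fin.append_update_right {α : Type*} (p : Fin m → α) (q : Fin n → α) (i : Fin n)
    (x : α) :
    Fin.append p (Function.update q i x)
      = Function.update (Fin.append p q) (Fin.natAdd m i) x := by
  funext j
  cases j using Fin.addCases with
  | left j =>
    rw [Function.update_of_ne (by simp [Fin.ext_iff]; omega), Fin.append_left, Fin.append_left]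
  | right j => by_cases hji : j = i <;> simp [hji]

theorem RestrStep.image {P P' : Set (Fin k → List A)} {f : (Fin k → List A) → Fin l → List A}
    (hf : f.Injective) (e : Fin k → Fin l)
    (hfe : ∀ x i y, f (Function.update x i y) = Function.update (f x) (e i) y)
    (h : RestrStep P P') : RestrStep (f '' P) (f '' P') := by
  obtain ⟨p, hp, i, rfl⟩ := h
  have hfp : f p (e i) = p i := by
    simpa using congrFun (hfe p i (p i)) (e i)
  refine ⟨f p, Set.mem_image_of_mem f hp, e i, ?_⟩
  rw [Set.image_union, Set.image_sdiff hf, Set.image_singleton]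
  congr 1
  ext w
  simp [hfe, hfp, eq_comm]

theorem RestrStep.union_left {S T T' : Set (Fin n → List A)} (hST : Disjoint S T)
    (h : RestrStep T T') : RestrStep (S ∪ T) (S ∪ T') := by
  obtain ⟨t, ht, i, rfl⟩ := h
  refine ⟨t, Or.inr ht, i, ?_⟩
  rw [Set.union_sdiff_distrib, Set.sdiff_singleton_eq_self (Set.disjoint_right.1 hST ht),
    Set.union_assoc]

theorem Reachable.image_append_right (q : Fin n → List A) {P P' : Set (Fin m → List A)}
    (h : Reachable P P') :
    Reachable ((Fin.append · q) '' P) ((Fin.append · q) '' P') :=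
  h.lift _ fun _ _ hstep =>
    hstep.image (fun _ _ hpp => (Fin.append_eq_append_iff.1 hpp).1) (Fin.castAdd n)
      fun x i y => Fin.append_update_left x q i y

theorem Reachable.union_image_append_left (p : Fin m → List A) {S : Set (Fin (m + n) → List A)}
    (hS : ∀ q, Fin.append p q ∉ S) {Q Q' : Set (Fin n → List A)} (h : Reachable Q Q') :
    Reachable (S ∪ Fin.append p '' Q) (S ∪ Fin.append p '' Q') :=
  h.lift (S ∪ Fin.append p '' ·) fun _ _ hstep =>
    (hstep.image (fun _ _ hqq => (Fin.append_eq_append_iff.1 hqq).2) (Fin.natAdd m)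
      (Fin.append_update_right p)).union_left
      (Set.disjoint_right.2 fun _ ⟨q, _, hq⟩ => hq ▸ hS q)

theorem reachable_union_image2_append {Q : Set (Fin n → List A)}
    (hQ : Reachable {fun _ => []} Q) {s : Set (Fin m → List A)} (hs : s.Finite) :
    ∀ T : Set (Fin (m + n) → List A), (∀ p ∈ s, ∀ q, Fin.append p q ∉ T) →
      Reachable (T ∪ Set.image2 Fin.append s {fun _ => []}) (T ∪ Set.image2 Fin.append s Q) := by
  induction s, hs using Set.Finite.induction_on with
  | empty =>
    intro T _
    simp only [Set.image2_empty_left, Set.union_empty]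
    exact Relation.ReflTransGen.refl
  | @insert a s ha _ ih =>
    intro T hT
    simp only [Set.image2_insert_left, ← Set.union_assoc]
    have hTa : ∀ p ∈ s, ∀ q, Fin.append p q ∉ T ∪ Fin.append a '' {fun _ => []} := by
      rintro p hp q (hq | ⟨_, _, hpq⟩)
      · exact hT p (Set.mem_insert_of_mem a hp) q hq
      · exact ha ((Fin.append_eq_append_iff.1 hpq).1 ▸ hp)
    have hsa : ∀ q, Fin.append a q ∉ T ∪ Set.image2 Fin.append s Q := by
      rintro q (hq | ⟨p, hp, _, _, hpq⟩)
      · exact hT a (Set.mem_insert a s) q hq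
      · exact ha ((Fin.append_eq_append_iff.1 hpq).1 ▸ hp)
    refine (ih _ hTa).trans ?_
    rw [Set.union_right_comm, Set.union_right_comm T _ (Set.image2 _ _ _)]
    exact Reachable.union_image_append_left a hsa hQ

theorem reachable_image2_append {P : Set (Fin m → List A)} {Q : Set (Fin n → List A)}
    (hPfin : P.Finite) (hP : Reachable {fun _ => []} P) (hQ : Reachable {fun _ => []} Q) :
    Reachable {fun _ => []} (Set.image2 Fin.append P Q) := by
  have hPε : Reachable {fun _ => []} (Set.image2 Fin.append P {fun _ : Fin n => []}) := by
    have hεε : Fin.append (fun _ : Fin m => ([] : List A)) (fun _ : Fin n => []) = fun _ => [] :=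
      Fin.append_castAdd_natAdd (f := fun _ => [])
    have h := hP.image_append_right (fun _ : Fin n => [])
    rwa [Set.image_singleton, hεε, ← Set.image2_singleton_right] at h
  have hεQ := reachable_union_image2_append hQ hPfin ∅ (by simp)
  rw [Set.empty_union, Set.empty_union] at hεQ
  exact hPε.trans hεQ

end

theorem stmt_7_general {A : Type*} {m n : ℕ}
    (P : Set (Fin m → List A)) (Q : Set (Fin n → List A))
    (hPfin : P.Finite) (hQfin : Q.Finite)
    (hP : MaxJoinlessCode P) (hQ : MaxJoinlessCode Q)
    (hPreach : Reachable {fun _ => ([] : List A)} P)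
    (hQreach : Reachable {fun _ => ([] : List A)} Q) :
    ({w : Fin (m + n) → List A | ∃ p ∈ P, ∃ q ∈ Q, w = Fin.append p q}).Finite ∧
    MaxJoinlessCode {w : Fin (m + n) → List A | ∃ p ∈ P, ∃ q ∈ Q, w = Fin.append p q} ∧
    Reachable {fun _ => ([] : List A)}
      {w : Fin (m + n) → List A | ∃ p ∈ P, ∃ q ∈ Q, w = Fin.append p q} := by
  have hPQ : {w : Fin (m + n) → List A | ∃ p ∈ P, ∃ q ∈ Q, w = Fin.append p q}
      = Set.image2 Fin.append P Q := by
    ext w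
    simp [Set.mem_image2, eq_comm]
  rw [hPQ]
  exact ⟨hPfin.image2 _ hQfin, maxJoinlessCode_image2_append hP hQ,
    reachable_image2_append hPfin hPreach hQreach⟩

/-- If `P ⊆ mA^*` and `Q ⊆ nA^*` are finite maximal joinless codes reachable from the
tuple of empty strings by one-step restrictions, then `P × Q ⊆ (m+n)A^*` is a finite
maximal joinless code reachable from the tuple of empty strings by one-step restrictions. -/
theorem stmt_7 {A : Type*} [Fintype A] (hA : 2 ≤ Fintype.card A)
    {m n : ℕ} (hm : 1 ≤ m) (hn : 1 ≤ n)
    (P : Set (Fin m → List A)) (Q : Set (Fin n → List A))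
    (hPfin : P.Finite) (hQfin : Q.Finite)
    (hP : MaxJoinlessCode P) (hQ : MaxJoinlessCode Q)
    (hPreach : Reachable {fun _ => ([] : List A)} P)
    (hQreach : Reachable {fun _ => ([] : List A)} Q) :
    ({w : Fin (m + n) → List A | ∃ p ∈ P, ∃ q ∈ Q, w = Fin.append p q}).Finite ∧
    MaxJoinlessCode {w : Fin (m + n) → List A | ∃ p ∈ P, ∃ q ∈ Q, w = Fin.append p q} ∧
    Reachable {fun _ => ([] : List A)}
      {w : Fin (m + n) → List A | ∃ p ∈ P, ∃ q ∈ Q, w = Fin.append p q} :=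
  stmt_7_general P Q hPfin hQfin hP hQ hPreach hQreach
end

section
/- Let A be a finite alphabet with |A| ≥ 2 and n ≥ 1. If S ⊆ nA^* is a product code and S can be reached from {(ε,...,ε)} by a finite sequence of one-step restrictions, then S is a maximal product code. -/
/-- A product code in `nA^*`: a cartesian product of `n` prefix codes. -/
def IsProductCode {A : Type*} {n : ℕ} (S : Set (Fin n → List A)) : Prop :=
  ∃ P : Fin n → Set (List A), (∀ i, PrefixCode (P i)) ∧
    S = {u | ∀ i, u i ∈ P i}

lemma prefix_snoc_aux {A : Type*} {l m : List A} {a : A} (h : l <+: m ++ [a]) :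
    l <+: m ∨ l = m ++ [a] := by
  rcases Nat.lt_or_ge m.length l.length with hl | hl
  · right
    apply h.eq_of_length
    have := h.length_le
    simp only [List.length_append, List.length_singleton] at this ⊢
    omega
  · left
    have hto : l = (m ++ [a]).take l.length := List.prefix_iff_eq_take.mp h
    rw [List.take_append_of_le_length hl] at hto
    rw [hto]
    exact List.take_prefix _ _

def CompleteCode {A : Type*} {n : ℕ} (S : Set (Fin n → List A)) : Prop :=
  ∀ v : Fin n → List A, ∃ u ∈ S, HasJoin u v

/-- If u joins the updated element, u joins p. -/
lemma joins_of_joins_update {A : Type*} {n : ℕ} {u p : Fin n → List A} {i : Fin n} {a : A}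
    (h : HasJoin u (Function.update p i (p i ++ [a]))) : HasJoin u p := by
  intro j
  by_cases hj : j = i
  · subst hj
    have hi := h j
    rw [Function.update_self] at hi
    rcases hi with hi | hi
    · rcases prefix_snoc_aux hi with h' | h'
      · exact Or.inl h'
      · right; rw [h']; exact ⟨[a], rfl⟩
    · right; exact List.IsPrefix.trans ⟨[a], rfl⟩ hi
  · have hi := h j
    rwa [Function.update_of_ne hj] at hi

lemma joinless_step {A : Type*} {n : ℕ} {P Q : Set (Fin n → List A)}
    (hP : JoinlessCode P) (h : RestrStep P Q) : JoinlessCode Q := by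
  obtain ⟨p, hpP, i, rfl⟩ := h
  intro u hu v hv huv hj
  rcases hu with hu | hu <;> rcases hv with hv | hv
  · exact hP u hu.1 v hv.1 huv hj
  · obtain ⟨a, rfl⟩ := hv
    have hup : HasJoin u p := joins_of_joins_update hj
    exact hP u hu.1 p hpP hu.2 hup
  · obtain ⟨a, rfl⟩ := hu
    have hvp : HasJoin v p := joins_of_joins_update (hasJoin_symm hj)
    exact hP v hv.1 p hpP hv.2 hvp
  · obtain ⟨a, rfl⟩ := hu
    obtain ⟨b, rfl⟩ := hv
    apply huv
    have hi := hj i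
    simp only [Function.update_self] at hi
    have hab : p i ++ [a] = p i ++ [b] := by
      rcases hi with hi | hi
      · exact hi.eq_of_length (by simp)
      · exact (hi.eq_of_length (by simp)).symm
    rw [hab]

lemma complete_step {A : Type*} [Nonempty A] {n : ℕ} {P Q : Set (Fin n → List A)}
    (hP : CompleteCode P) (h : RestrStep P Q) : CompleteCode Q := by
  obtain ⟨p, hpP, i, rfl⟩ := h
  intro v
  obtain ⟨u, huP, hj⟩ := hP v
  by_cases hup : u = p
  · subst hup
    -- need a ∈ A such that update u i (u i ++ [a]) joins v
    have key : ∃ a : A, (u i ++ [a] <+: v i ∨ v i <+: u i ++ [a]) := by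
      rcases hj i with hi | hi
      · rcases Nat.lt_or_ge (u i).length (v i).length with hl | hl
        · -- u i strict prefix of v i
          obtain ⟨t, ht⟩ := hi
          cases t with
          | nil => rw [List.append_nil] at ht; rw [ht] at hl; omega
          | cons a t =>
            refine ⟨a, Or.inl ⟨t, ?_⟩⟩
            rw [← ht]; simp
        · -- equal lengths: u i = v i
          have : u i = v i := hi.eq_of_length (le_antisymm hi.length_le hl)
          obtain ⟨a⟩ := ‹Nonempty A›
          exact ⟨a, Or.inr (this ▸ ⟨[a], rfl⟩)⟩
      · obtain ⟨a⟩ := ‹Nonempty A›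
        exact ⟨a, Or.inr (hi.trans ⟨[a], rfl⟩)⟩
    obtain ⟨a, ha⟩ := key
    refine ⟨Function.update u i (u i ++ [a]), Or.inr ⟨a, rfl⟩, fun j => ?_⟩
    by_cases hji : j = i
    · subst hji; rw [Function.update_self]; exact ha
    · rw [Function.update_of_ne hji]; exact hj j
  · exact ⟨u, Or.inl ⟨huP, hup⟩, hj⟩

/-- A product code that can be reached from the tuple of empty strings by one-step
restrictions is a maximal product code (i.e., a maximal joinless code). -/
theorem stmt_8 {A : Type*} [Fintype A] (hA : 2 ≤ Fintype.card A)
    {n : ℕ} (hn : 1 ≤ n) (S : Set (Fin n → List A))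
    (hprod : IsProductCode S)
    (hreach : Reachable {fun _ => ([] : List A)} S) :
    MaxJoinlessCode S := by
  have hne : Nonempty A := Fintype.card_pos_iff.mp (by omega)
  have key : JoinlessCode S ∧ CompleteCode S := by
    clear hprod
    induction hreach with
    | refl =>
      constructor
      · intro u hu v hv huv _; exact huv (hu.trans hv.symm)
      · intro v; exact ⟨_, rfl, fun i => Or.inl (List.nil_prefix)⟩
    | tail _ hstep ih =>
      exact ⟨joinless_step ih.1 hstep, complete_step ih.2 hstep⟩
  refine ⟨key.1, fun T hT hST => ?_⟩
  apply Set.Subset.antisymm hST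
  intro t ht
  obtain ⟨u, huS, hj⟩ := key.2 t
  by_cases hut : u = t
  · exact hut ▸ huS
  · exact absurd hj (hT u (hST huS) t ht hut)
end

section
/- Let k ≥ 3, identify A_2 = {a_0, a_1} as a subset of A_k = {a_0,...,a_{k−1}}, and let A_{[2,k[} = {a_2,...,a_{k−1}}. If X_{i=1}^n Q_i is a finite maximal product code in nA_2^* (each Q_i a finite maximal prefix code of A_2^*), then X_{i=1}^n ( Q_i ∪ spref(Q_i)·A_{[2,k[} ) is a finite maximal product code in nA_k^*. -/
/-- A maximal prefix code of the sub-free-monoid `L` (e.g. `A_2^* ⊆ A_k^*`):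
a prefix code contained in `L` not strictly contained in any prefix code `⊆ L`. -/
def MaxPrefixCodeOn {A : Type*} (L P : Set (List A)) : Prop :=
  P ⊆ L ∧ PrefixCode P ∧ ∀ Q : Set (List A), Q ⊆ L → PrefixCode Q → P ⊆ Q → P = Q

/-- `A_2^*` viewed inside `A_k^*`: strings using only the letters `a_0, a_1`. -/
def Str2 (k : ℕ) : Set (List (Fin k)) :=
  {w | ∀ a ∈ w, (a : ℕ) < 2}

/-- The set of strict prefixes of elements of `P`. -/
def spref {A : Type*} (P : Set (List A)) : Set (List A) :=
  {x | ∃ p ∈ P, x <+: p ∧ x ≠ p}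

/-- `P ∪ spref(P)·A_{[2,k[}`. -/
def extd {k : ℕ} (P : Set (List (Fin k))) : Set (List (Fin k)) :=
  P ∪ {w | ∃ x ∈ spref P, ∃ b : Fin k, 2 ≤ (b : ℕ) ∧ w = x ++ [b]}

lemma spref_sub_Str2 {k : ℕ} {Q : Set (List (Fin k))} (hQ : Q ⊆ Str2 k) :
    spref Q ⊆ Str2 k := by
  rintro x ⟨q, hq, hpre, _⟩ a ha
  exact hQ hq a (hpre.subset ha)

lemma complete_of_max {k : ℕ} {Q : Set (List (Fin k))} (h : MaxPrefixCodeOn (Str2 k) Q) :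
    ∀ w ∈ Str2 k, ∃ q ∈ Q, q <+: w ∨ w <+: q := by
  intro w hw
  by_contra hcon
  push_neg at hcon
  have hw' : w ∉ Q := fun h' => (hcon w h').1 (List.prefix_refl w)
  have hsub : insert w Q ⊆ Str2 k := Set.insert_subset hw h.1
  have hpc : PrefixCode (insert w Q) := by
    rintro p hp q hq hpq
    rcases hp with rfl | hp <;> rcases hq with rfl | hq
    · rfl
    · exact absurd hpq (hcon q hq).2
    · exact absurd hpq (hcon p hp).1
    · exact h.2.1 p hp q hq hpq
  have := h.2.2 _ hsub hpc (Set.subset_insert w Q)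
  exact hw' (this ▸ Set.mem_insert w Q)

lemma str2_prefix_snoc {k : ℕ} {q x : List (Fin k)} {b : Fin k} (hq : q ∈ Str2 k)
    (hb : 2 ≤ (b : ℕ)) (h : q <+: x ++ [b]) : q <+: x := by
  rcases le_or_gt q.length x.length with hl | hl
  · exact List.prefix_of_prefix_length_le h (List.prefix_append x [b]) hl
  · exfalso
    have hle : q.length ≤ x.length + 1 := by simpa using h.length_le
    have heq : q = x ++ [b] := h.eq_of_length (by simp; omega)
    have : b ∈ q := heq ▸ (by simp)
    have := hq b this
    omega

lemma extd_prefixcode {k : ℕ} {Q : Set (List (Fin k))} (hQsub : Q ⊆ Str2 k)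
    (hpc : PrefixCode Q) : PrefixCode (extd Q) := by
  rintro p hp q hq hpre
  rcases hp with hp | ⟨x, hx, b, hb, rfl⟩ <;> rcases hq with hq | ⟨y, hy, c, hc, rfl⟩
  · exact hpc p hp q hq hpre
  · exfalso
    have h1 : p <+: y := str2_prefix_snoc (hQsub hp) hc hpre
    obtain ⟨q', hq', hyq', hne⟩ := hy
    have hpq : p = q' := hpc p hp q' hq' (h1.trans hyq')
    subst hpq
    have : y = p := hyq'.eq_of_length (le_antisymm hyq'.length_le h1.length_le)
    exact hne this
  · exfalso
    have hbq : b ∈ q := hpre.subset (by simp)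
    have := hQsub hq b hbq
    omega
  · have hlen : x.length + 1 ≤ y.length + 1 := by simpa using hpre.length_le
    rcases eq_or_lt_of_le hlen with heq | hlt
    · exact hpre.eq_of_length (by simpa using heq)
    · exfalso
      have hxy : x ++ [b] <+: y :=
        List.prefix_of_prefix_length_le hpre (List.prefix_append y [c]) (by simpa using Nat.lt_succ_iff.mp hlt)
      have hby : b ∈ y := hxy.subset (by simp)
      have := spref_sub_Str2 hQsub hy b hby
      omega

lemma take_drop_split {k : ℕ} (w : List (Fin k)) :
    ∃ x r, w = x ++ r ∧ (∀ a ∈ x, (a : ℕ) < 2) ∧ (∀ b r', r = b :: r' → 2 ≤ (b : ℕ)) := by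
  induction w with
  | nil => exact ⟨[], [], rfl, by simp, by simp⟩
  | cons a l ih =>
    by_cases ha : (a : ℕ) < 2
    · obtain ⟨x, r, heq, hx, hr⟩ := ih
      refine ⟨a :: x, r, by simp [heq], ?_, hr⟩
      intro b hb
      rcases List.mem_cons.mp hb with rfl | hb
      · exact ha
      · exact hx b hb
    · exact ⟨[], a :: l, rfl, by simp, by rintro b r' h; injection h with h1 _; subst h1; omega⟩

lemma extd_complete {k : ℕ} {Q : Set (List (Fin k))} (hQ : MaxPrefixCodeOn (Str2 k) Q) :
    ∀ w : List (Fin k), ∃ p ∈ extd Q, p <+: w ∨ w <+: p := by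
  intro w
  obtain ⟨x, r, rfl, hx, hr⟩ := take_drop_split w
  obtain ⟨q, hq, hcomp⟩ := complete_of_max hQ x hx
  rcases hcomp with h | h
  · exact ⟨q, Or.inl hq, Or.inl (h.trans (List.prefix_append x r))⟩
  · by_cases hxq : x = q
    · subst hxq
      exact ⟨x, Or.inl hq, Or.inl (List.prefix_append x r)⟩
    · cases r with
      | nil => exact ⟨q, Or.inl hq, Or.inr (by simpa using h)⟩
      | cons b r' =>
        refine ⟨x ++ [b], Or.inr ⟨x, ⟨q, hq, h, hxq⟩, b, hr b r' rfl, rfl⟩, Or.inl ?_⟩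
        exact ⟨r', by simp⟩

lemma spref_finite {A : Type*} {Q : Set (List A)} (h : Q.Finite) : (spref Q).Finite := by
  have hsub : spref Q ⊆ ⋃ q ∈ Q, {x | x <+: q} := by
    rintro x ⟨q, hq, hx, _⟩
    exact Set.mem_biUnion hq hx
  refine Set.Finite.subset (Set.Finite.biUnion h fun q _ => ?_) hsub
  have : {x : List A | x <+: q} ⊆ (fun m => q.take m) '' Set.Iic q.length := by
    intro x hx
    exact ⟨x.length, hx.length_le, (List.prefix_iff_eq_take.mp hx).symm⟩
  exact Set.Finite.subset ((Set.finite_Iic _).image _) this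

lemma extd_finite {k : ℕ} {Q : Set (List (Fin k))} (h : Q.Finite) : (extd Q).Finite := by
  refine Set.Finite.union h ?_
  have hsub : {w | ∃ x ∈ spref Q, ∃ b : Fin k, 2 ≤ (b : ℕ) ∧ w = x ++ [b]} ⊆
      (fun p : List (Fin k) × Fin k => p.1 ++ [p.2]) '' ((spref Q) ×ˢ Set.univ) := by
    rintro w ⟨x, hx, b, _, rfl⟩
    exact ⟨(x, b), ⟨hx, trivial⟩, rfl⟩
  exact Set.Finite.subset (((spref_finite h).prod Set.finite_univ).image _) hsub

/-- If `X_i Q_i` is a finite maximal product code in `n(A_2)^*` (each `Q_i` a finite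
maximal prefix code of `A_2^*`), then `X_i (Q_i ∪ spref(Q_i)·A_{[2,k[})` is a finite
maximal product code in `n(A_k)^*`. -/
theorem stmt_15 {n k : ℕ} (hn : 1 ≤ n) (hk : 3 ≤ k)
    (Q : Fin n → Set (List (Fin k)))
    (hfin : ∀ i, (Q i).Finite)
    (hQ : ∀ i, MaxPrefixCodeOn (Str2 k) (Q i)) :
    ({u : Fin n → List (Fin k) | ∀ i, u i ∈ extd (Q i)}).Finite ∧
    IsProductCode {u : Fin n → List (Fin k) | ∀ i, u i ∈ extd (Q i)} ∧
    MaxJoinlessCode {u : Fin n → List (Fin k) | ∀ i, u i ∈ extd (Q i)} := by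
  constructor
  · have : {u : Fin n → List (Fin k) | ∀ i, u i ∈ extd (Q i)} ⊆
        Set.pi Set.univ (fun i => extd (Q i)) := by
      intro u hu i _
      exact hu i
    exact Set.Finite.subset (Set.Finite.pi fun i => extd_finite (hfin i)) this
  constructor
  · exact ⟨fun i => extd (Q i), fun i => extd_prefixcode (hQ i).1 (hQ i).2.1, rfl⟩
  · constructor
    · intro u hu v hv huv hjoin
      apply huv
      funext i
      rcases hjoin i with h | h
      · exact extd_prefixcode (hQ i).1 (hQ i).2.1 _ (hu i) _ (hv i) h
      · exact (extd_prefixcode (hQ i).1 (hQ i).2.1 _ (hv i) _ (hu i) h).symm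
    · intro T hT hST
      refine Set.Subset.antisymm hST fun t ht => ?_
      choose p hp hcomp using fun i => extd_complete (hQ i) (t i)
      have hpS : p ∈ {u : Fin n → List (Fin k) | ∀ i, u i ∈ extd (Q i)} := hp
      by_cases hpt : p = t
      · exact hpt ▸ hpS
      · exact absurd (fun i => hcomp i) (hT p (hST hpS) t ht hpt)
end

section
/- Let k ≥ 3, identify A_2 = {a_0, a_1} as a subset of A_k = {a_0,...,a_{k−1}}, and let A_{[2,k[} = {a_2,...,a_{k−1}}. If P is a finite maximal prefix code of A_2^*, then the set {a_0} ∪ a_1·P ∪ spref({a_0} ∪ a_1·P)·A_{[2,k[} is a finite maximal prefix code of A_k^*, where a_1·P = {a_1 p : p ∈ P}. -/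
/-- The set `{a_0} ∪ a_1·P`. -/
def base16 {k : ℕ} (hk : 3 ≤ k) (P : Set (List (Fin k))) : Set (List (Fin k)) :=
  {[(⟨0, by omega⟩ : Fin k)]} ∪ (fun w => (⟨1, by omega⟩ : Fin k) :: w) '' P

/-!
A prefix code `P ⊆ L` is maximal in `L` exactly when every word of `L` is comparable (for the
prefix order) with some element of `P`. Every binary word is comparable with `a_0` or with some
`a_1 p`, `p ∈ P`. A word over `A_k` either is binary, or its longest binary prefix `x` is followed
by a letter `c ≥ 2`; then `x` is comparable with some `q` of the base code, and either `q` is a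
prefix of the word or `x` is a strict prefix of `q`, in which case `x c` belongs to the new code.
No new word `x c` can be comparable with an old one, since old words are binary.
-/

def CompleteOn {A : Type*} (L P : Set (List A)) : Prop :=
  ∀ w ∈ L, ∃ p ∈ P, p <+: w ∨ w <+: p

section General

variable {A : Type*} {L P : Set (List A)}

theorem List.forall_mem_or_exists_eq_append_cons (p : A → Prop) (w : List A) :
    (∀ a ∈ w, p a) ∨ ∃ x c y, w = x ++ c :: y ∧ (∀ a ∈ x, p a) ∧ ¬ p c := by
  induction w with
  | nil => exact Or.inl (by simp)
  | cons c t ih =>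
    by_cases hc : p c
    · rcases ih with h | ⟨x, d, y, rfl, hx, hd⟩
      · exact Or.inl (List.forall_mem_cons.mpr ⟨hc, h⟩)
      · exact Or.inr ⟨c :: x, d, y, rfl, List.forall_mem_cons.mpr ⟨hc, hx⟩, hd⟩
    · exact Or.inr ⟨[], c, t, rfl, by simp, hc⟩

theorem PrefixCode.insert (hP : PrefixCode P) {w : List A}
    (hw : ∀ p ∈ P, ¬ p <+: w ∧ ¬ w <+: p) : PrefixCode (insert w P) := by
  rintro p (rfl | hp) q (rfl | hq) hpq
  · rfl
  · exact absurd hpq (hw q hq).2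
  · exact absurd hpq (hw p hp).1
  · exact hP p hp q hq hpq

theorem MaxPrefixCodeOn.completeOn (hP : MaxPrefixCodeOn L P) : CompleteOn L P := by
  obtain ⟨hPL, hPpc, hPmax⟩ := hP
  intro w hw
  by_contra! h
  have hins : P = insert w P :=
    hPmax _ (Set.insert_subset hw hPL) (hPpc.insert h) (Set.subset_insert w P)
  exact (h w (hins ▸ Set.mem_insert w P)).1 (List.prefix_refl w)

theorem PrefixCode.maxPrefixCode (hP : PrefixCode P) (hcompl : CompleteOn Set.univ P) :
    MaxPrefixCode P := by
  refine ⟨hP, fun Q hQ hPQ => (hPQ.antisymm fun q hq => ?_)⟩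
  obtain ⟨p, hp, hpq | hqp⟩ := hcompl q (Set.mem_univ q)
  · exact hQ p (hPQ hp) q hq hpq ▸ hp
  · exact (hQ q hq p (hPQ hp) hqp).symm ▸ hp

theorem Set.Finite.spref (hP : P.Finite) : (spref P).Finite :=
  (hP.biUnion fun p _ => p.inits.finite_toSet).subset
    fun x ⟨p, hp, hxp, _⟩ => Set.mem_biUnion hp ((List.mem_inits x p).mpr hxp)

end General

section Extension

variable {k : ℕ} {P : Set (List (Fin k))}

theorem Set.Finite.extd (hP : P.Finite) : (extd P).Finite := by
  refine hP.union
    ((hP.spref.image2 (fun x b => x ++ [b]) (Set.finite_univ (α := Fin k))).subset ?_)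
  rintro w ⟨x, hx, b, -, rfl⟩
  exact Set.mem_image2_of_mem hx (Set.mem_univ b)

theorem not_mem_str2_of_concat_prefix {x q : List (Fin k)} {b : Fin k} (hb : 2 ≤ (b : ℕ))
    (h : x ++ [b] <+: q) : q ∉ Str2 k := fun hq => by
  have := hq b (h.subset (by simp))
  omega

theorem PrefixCode.extd (hP : PrefixCode P) (hPL : P ⊆ Str2 k) : PrefixCode (extd P) := by
  rintro p (hp | ⟨x, hx, b, hb, rfl⟩) q (hq | ⟨y, ⟨q', hq', hyq', hyne⟩, c, -, rfl⟩) hpq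
  · exact hP p hp q hq hpq
  · refine (List.prefix_concat_iff.mp hpq).resolve_right fun hpy => hyne ?_
    obtain rfl := hP p hp q' hq' (hpy.trans hyq')
    exact hyq'.eq_of_length_le hpy.length_le
  · exact absurd (hPL hq) (not_mem_str2_of_concat_prefix hb hpq)
  · refine (List.prefix_concat_iff.mp hpq).resolve_right fun hxy => ?_
    exact not_mem_str2_of_concat_prefix hb (hxy.trans hyq') (hPL hq')

theorem CompleteOn.extd (hP : CompleteOn (Str2 k) P) : CompleteOn Set.univ (extd P) := by
  intro w _
  rcases List.forall_mem_or_exists_eq_append_cons (fun a : Fin k => (a : ℕ) < 2) w with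
    hw | ⟨x, c, y, rfl, hx, hc⟩
  · obtain ⟨p, hp, hcomp⟩ := hP w hw
    exact ⟨p, Or.inl hp, hcomp⟩
  obtain ⟨p, hp, hpx | hxp⟩ := hP x hx
  · exact ⟨p, Or.inl hp, Or.inl (hpx.trans (List.prefix_append x (c :: y)))⟩
  by_cases hxeq : x = p
  · exact ⟨p, Or.inl hp, Or.inl (hxeq ▸ List.prefix_append x (c :: y))⟩
  · refine ⟨x ++ [c], Or.inr ⟨x, ⟨p, hp, hxp, hxeq⟩, c, by omega, rfl⟩, Or.inl ?_⟩
    exact ⟨y, by simp⟩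

end Extension

section Base

variable {k : ℕ} (hk : 3 ≤ k) {P : Set (List (Fin k))}

theorem Set.Finite.base16 (hP : P.Finite) : (base16 hk P).Finite :=
  (Set.finite_singleton _).union (hP.image _)

theorem base16_subset_str2 (hPL : P ⊆ Str2 k) : base16 hk P ⊆ Str2 k := by
  rintro w (rfl | ⟨p, hp, rfl⟩) a ha
  · simp only [List.mem_singleton] at ha
    simp [ha]
  · rcases List.mem_cons.mp ha with rfl | ha
    · simp
    · exact hPL hp a ha

theorem PrefixCode.base16 (hP : PrefixCode P) : PrefixCode (base16 hk P) := by
  rintro p (rfl | ⟨p', hp', rfl⟩) q (rfl | ⟨q', hq', rfl⟩) hpq <;>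
    simp only [List.cons_prefix_cons, Fin.mk.injEq] at hpq
  · rfl
  · omega
  · omega
  · rw [hP p' hp' q' hq' hpq.2]

theorem CompleteOn.base16 (hP : CompleteOn (Str2 k) P) : CompleteOn (Str2 k) (base16 hk P) := by
  rintro (_ | ⟨c, v⟩) hw
  · exact ⟨_, Or.inl rfl, Or.inr List.nil_prefix⟩
  have hc : (c : ℕ) < 2 := hw c List.mem_cons_self
  obtain ⟨n, hn, rfl⟩ : ∃ n, ∃ hn : n < k, c = ⟨n, hn⟩ := ⟨c, c.isLt, rfl⟩
  obtain rfl | rfl : n = 0 ∨ n = 1 := by simp only at hc; omega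
  · exact ⟨_, Or.inl rfl, Or.inl (List.prefix_append _ v)⟩
  · obtain ⟨p, hp, hcomp⟩ := hP v fun a ha => hw a (List.mem_cons_of_mem _ ha)
    refine ⟨_, Or.inr ⟨p, hp, rfl⟩, ?_⟩
    simpa only [List.cons_prefix_cons, true_and] using hcomp

end Base

/-- If `P` is a finite maximal prefix code of `A_2^*` (inside `A_k^*`, `k ≥ 3`), then
`{a_0} ∪ a_1·P ∪ spref({a_0} ∪ a_1·P)·A_{[2,k[}` is a finite maximal prefix code
of `A_k^*`. -/
theorem stmt_16 {k : ℕ} (hk : 3 ≤ k) (P : Set (List (Fin k)))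
    (hfin : P.Finite) (hP : MaxPrefixCodeOn (Str2 k) P) :
    (extd (base16 hk P)).Finite ∧ MaxPrefixCode (extd (base16 hk P)) := by
  have hcompl : CompleteOn (Str2 k) (base16 hk P) := hP.completeOn.base16 hk
  obtain ⟨hPL, hPpc, -⟩ := hP
  have hcode : PrefixCode (extd (base16 hk P)) :=
    (hPpc.base16 hk).extd (base16_subset_str2 hk hPL)
  exact ⟨(hfin.base16 hk).extd, hcode.maxPrefixCode hcompl.extd⟩
end
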